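/- arXiv:1107.2349 — 2 statements merged into one kernel-verified Lean document; each statement's English description precedes it below -/
import Mathlib

section
/- Let (R, m) be a Noetherian local ring and f ∈ m. Suppose given, for all i ∈ ℤ, finitely generated R-modules A^i, B^i and R-modules V^i, W^i fitting into two long exact sequences: ⋯ → A^{i-1} →^{×f} A^{i-1} →^{α_i} V^i →^{δ_i} A^i →^{×f} A^i → ⋯ and ⋯ → B^{i-1} →^{×f} B^{i-1} →^{β_i} W^i → B^i →^{×f} B^i → ⋯, together with R-linear maps Φ^i : B^i → A^i and γ_i : W^i → V^i making all squares commute. If every Φ^i is injective and every γ_i is surjective, then every Φ^i is an isomorphism. -/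
/-!
A four-lemma chase in the ladder shows `A^i = Φ^i(B^i) + f A^i`: the vertical maps in the
columns of `V^(i+1)` and `A^(i+1)` are surjective and injective. Since `A^i` is finitely
generated and `f` lies in the maximal ideal, Nakayama's lemma makes `Φ^i` surjective.
-/

namespace LinearMap

variable {R A₀ A V A' B W B' : Type*} [CommRing R]
  [AddCommGroup A₀] [Module R A₀] [AddCommGroup A] [Module R A] [AddCommGroup V] [Module R V]
  [AddCommGroup A'] [Module R A'] [AddCommGroup B] [Module R B] [AddCommGroup W] [Module R W]
  [AddCommGroup B'] [Module R B']

/- The four lemma applied to the ladder `A₀ → B × A₀ → W → B'` over `A₀ → A → V → A'`,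
with middle vertical map `Φ.coprod g`. -/
theorem range_sup_range_eq_top_of_surjective_of_injective
    {g : A₀ →ₗ[R] A} {a : A →ₗ[R] V} {d : V →ₗ[R] A'} {b : B →ₗ[R] W} {e : W →ₗ[R] B'}
    {Φ : B →ₗ[R] A} {γ : W →ₗ[R] V} {Φ' : B' →ₗ[R] A'}
    (hga : Function.Exact g a) (had : Function.Exact a d) (hbe : Function.Exact b e)
    (hsq : a ∘ₗ Φ = γ ∘ₗ b) (hsq' : Φ' ∘ₗ e = d ∘ₗ γ)
    (hγ : Function.Surjective γ) (hΦ' : Function.Injective Φ') :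
    range Φ ⊔ range g = ⊤ := by
  rw [← range_coprod, range_eq_top]
  refine surjective_of_surjective_of_surjective_of_injective (inr R B A₀) (b ∘ₗ fst R B A₀) e
    g a d id (Φ.coprod g) γ Φ' (by ext; simp) ?_ hsq'.symm
    (fst_surjective.comp_exact_iff_exact.mpr hbe) hga had Function.surjective_id hγ hΦ'
  ext y
  · simpa using congr($hsq y)
  · simp [hga.apply_apply_eq_zero]

end LinearMap

open IsLocalRing LinearMap in
theorem Submodule.eq_top_of_sup_range_lsmul_eq_top {R M : Type*} [CommRing R] [IsLocalRing R]
    [AddCommGroup M] [Module R M] [Module.Finite R M] {f : R} (hf : f ∈ maximalIdeal R)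
    {N : Submodule R M} (h : N ⊔ range (lsmul R M f) = ⊤) : N = ⊤ := by
  have hfM : range (lsmul R M f) ≤ maximalIdeal R • ⊤ := by
    rintro _ ⟨z, rfl⟩
    exact smul_mem_smul hf mem_top
  exact eq_top_iff.mpr <| le_of_le_smul_of_le_jacobson_bot Module.Finite.fg_top
    (maximalIdeal_le_jacobson _) (h.ge.trans (sup_le_sup_left hfM N))

theorem ladder_isomorphism_general {R : Type*} [CommRing R] [IsLocalRing R]
    (f : R) (hf : f ∈ IsLocalRing.maximalIdeal R)
    (A B V W : ℤ → Type*)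
    [∀ i, AddCommGroup (A i)] [∀ i, Module R (A i)]
    [∀ i, AddCommGroup (B i)] [∀ i, Module R (B i)]
    [∀ i, AddCommGroup (V i)] [∀ i, Module R (V i)]
    [∀ i, AddCommGroup (W i)] [∀ i, Module R (W i)]
    [∀ i, Module.Finite R (A i)]
    (a : ∀ i, A i →ₗ[R] V (i + 1)) (d : ∀ i, V i →ₗ[R] A i)
    (b : ∀ i, B i →ₗ[R] W (i + 1)) (e : ∀ i, W i →ₗ[R] B i)
    (Φ : ∀ i, B i →ₗ[R] A i) (γ : ∀ i, W i →ₗ[R] V i)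
    -- exactness of the top row
    (hA1 : ∀ i, Function.Exact (fun x : A i => f • x) (a i))
    (hA2 : ∀ i, Function.Exact (a i) (d (i + 1)))
    -- exactness of the bottom row
    (hB2 : ∀ i, Function.Exact (b i) (e (i + 1)))
    -- commutativity of the squares
    (hsq1 : ∀ i, (a i).comp (Φ i) = (γ (i + 1)).comp (b i))
    (hsq2 : ∀ i, (Φ i).comp (e i) = (d i).comp (γ i))
    -- vertical maps injective / surjective
    (hΦ : ∀ i, Function.Injective (Φ i))
    (hγ : ∀ i, Function.Surjective (γ i)) :
    ∀ i, Function.Bijective (Φ i) := by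
  intro i
  have hcoker : LinearMap.range (Φ i) ⊔ LinearMap.range (LinearMap.lsmul R (A i) f) = ⊤ :=
    LinearMap.range_sup_range_eq_top_of_surjective_of_injective (hA1 i) (hA2 i) (hB2 i)
      (hsq1 i) (hsq2 (i + 1)) (hγ (i + 1)) (hΦ (i + 1))
  exact ⟨hΦ i, LinearMap.range_eq_top.mp (Submodule.eq_top_of_sup_range_lsmul_eq_top hf hcoker)⟩

/-- Diagram chase in a commutative ladder of two long exact sequences
`⋯ → A^i →(×f) A^i →(a i) V^(i+1) →(d (i+1)) A^(i+1) → ⋯` and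
`⋯ → B^i →(×f) B^i →(b i) W^(i+1) →(e (i+1)) B^(i+1) → ⋯`
with vertical maps `Φ^i : B^i → A^i` injective and `γ^i : W^i → V^i` surjective:
if moreover `R` is Noetherian local, `f` belongs to the maximal ideal, the modules
`A^i`, `B^i` are finitely generated and vanish outside a bounded range of indices,
then every `Φ^i` is an isomorphism. -/
theorem ladder_isomorphism {R : Type*} [CommRing R] [IsNoetherianRing R] [IsLocalRing R]
    (f : R) (hf : f ∈ IsLocalRing.maximalIdeal R)
    (A B V W : ℤ → Type*)
    [∀ i, AddCommGroup (A i)] [∀ i, Module R (A i)]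
    [∀ i, AddCommGroup (B i)] [∀ i, Module R (B i)]
    [∀ i, AddCommGroup (V i)] [∀ i, Module R (V i)]
    [∀ i, AddCommGroup (W i)] [∀ i, Module R (W i)]
    [∀ i, Module.Finite R (A i)] [∀ i, Module.Finite R (B i)]
    (a : ∀ i, A i →ₗ[R] V (i + 1)) (d : ∀ i, V i →ₗ[R] A i)
    (b : ∀ i, B i →ₗ[R] W (i + 1)) (e : ∀ i, W i →ₗ[R] B i)
    (Φ : ∀ i, B i →ₗ[R] A i) (γ : ∀ i, W i →ₗ[R] V i)
    -- exactness of the top row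
    (hA1 : ∀ i, Function.Exact (fun x : A i => f • x) (a i))
    (hA2 : ∀ i, Function.Exact (a i) (d (i + 1)))
    (hA3 : ∀ i, Function.Exact (d i) (fun x : A i => f • x))
    -- exactness of the bottom row
    (hB1 : ∀ i, Function.Exact (fun x : B i => f • x) (b i))
    (hB2 : ∀ i, Function.Exact (b i) (e (i + 1)))
    (hB3 : ∀ i, Function.Exact (e i) (fun x : B i => f • x))
    -- commutativity of the squares
    (hsq1 : ∀ i, (a i).comp (Φ i) = (γ (i + 1)).comp (b i))
    (hsq2 : ∀ i, (Φ i).comp (e i) = (d i).comp (γ i))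
    -- vertical maps injective / surjective
    (hΦ : ∀ i, Function.Injective (Φ i))
    (hγ : ∀ i, Function.Surjective (γ i))
    -- boundedness: only finitely many `A^i`, `B^i` are nonzero
    (hbdd : ∃ n : ℤ, ∀ i : ℤ, n < |i| →
      ((∀ x : A i, x = 0) ∧ ∀ x : B i, x = 0)) :
    ∀ i, Function.Bijective (Φ i) :=
  ladder_isomorphism_general f hf A B V W a d b e Φ γ hA1 hA2 hB2 hsq1 hsq2 hΦ hγ
end

section
/- With the hypotheses of the preceding commutative diagram of two long exact sequences (Φ^i injective for all i, γ_i surjective for all i), for each i and each z ∈ A^{i-1} there exists u ∈ B^{i-1} such that z − Φ^{i-1}(u) ∈ f·A^{i-1}. Equivalently, the cokernel C^{i-1} of Φ^{i-1} satisfies C^{i-1} = f·C^{i-1}. -/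
/-!
Lift `a z` along the surjection `γ` to some `w`. Then `Φ (e w) = d (a z) = 0`, so `e w = 0` by
injectivity of `Φ`, and exactness of the bottom row gives `w = b u`. Commutativity now says
`a (Φ u) = a z`, so `z - Φ u` lies in `ker a = f • A`.
-/

section Ladder

variable {R : Type*} [Semiring R]
  {A V A' B W B' : Type*}
  [AddCommGroup A] [Module R A] [AddCommGroup V] [Module R V] [AddCommGroup A'] [Module R A']
  [AddCommGroup B] [Module R B] [AddCommGroup W] [Module R W] [AddCommGroup B'] [Module R B']

theorem exists_map_eq_of_ladder {a : A →ₗ[R] V} {d : V →ₗ[R] A'} {b : B →ₗ[R] W}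
    {e : W →ₗ[R] B'} {Φ : B →ₗ[R] A} {γ : W →ₗ[R] V} {Φ' : B' →ₗ[R] A'}
    (hda : ∀ x, d (a x) = 0) (hbe : Function.Exact b e)
    (hsq : a ∘ₗ Φ = γ ∘ₗ b) (hsq' : Φ' ∘ₗ e = d ∘ₗ γ)
    (hΦ' : Function.Injective Φ') (hγ : Function.Surjective γ) (z : A) :
    ∃ u : B, a (Φ u) = a z := by
  obtain ⟨w, hw⟩ := hγ (a z)
  have hew : e w = 0 := hΦ' <| by
    rw [map_zero, ← LinearMap.comp_apply, hsq', LinearMap.comp_apply, hw, hda]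
  obtain ⟨u, rfl⟩ := (hbe w).mp hew
  exact ⟨u, by rw [← LinearMap.comp_apply, hsq, LinearMap.comp_apply, hw]⟩

end Ladder

theorem ladder_diagram_chase_general {R : Type*} [CommRing R] (f : R)
    (A B V W : ℤ → Type*)
    [∀ i, AddCommGroup (A i)] [∀ i, Module R (A i)]
    [∀ i, AddCommGroup (B i)] [∀ i, Module R (B i)]
    [∀ i, AddCommGroup (V i)] [∀ i, Module R (V i)]
    [∀ i, AddCommGroup (W i)] [∀ i, Module R (W i)]
    (a : ∀ i, A i →ₗ[R] V (i + 1)) (d : ∀ i, V i →ₗ[R] A i)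
    (b : ∀ i, B i →ₗ[R] W (i + 1)) (e : ∀ i, W i →ₗ[R] B i)
    (Φ : ∀ i, B i →ₗ[R] A i) (γ : ∀ i, W i →ₗ[R] V i)
    -- exactness of the top row
    (hA1 : ∀ i, Function.Exact (fun x : A i => f • x) (a i))
    (hA2 : ∀ i, Function.Exact (a i) (d (i + 1)))
    -- exactness of the bottom row
    (hB2 : ∀ i, Function.Exact (b i) (e (i + 1)))
    -- commutativity of the squares
    (hsq1 : ∀ i, (a i).comp (Φ i) = (γ (i + 1)).comp (b i))
    (hsq2 : ∀ i, (Φ i).comp (e i) = (d i).comp (γ i))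
    -- vertical maps injective / surjective
    (hΦ : ∀ i, Function.Injective (Φ i))
    (hγ : ∀ i, Function.Surjective (γ i)) :
    ∀ i, ∀ z : A i, ∃ u : B i, ∃ w : A i, z - Φ i u = f • w := by
  intro i z
  obtain ⟨u, hu⟩ := exists_map_eq_of_ladder (hA2 i).apply_apply_eq_zero (hB2 i) (hsq1 i)
    (hsq2 (i + 1)) (hΦ (i + 1)) (hγ (i + 1)) z
  obtain ⟨w, hw⟩ := (hA1 i (z - Φ i u)).mp (by rw [map_sub, hu, sub_self])
  exact ⟨u, w, hw.symm⟩

/-- Diagram chase in a commutative ladder of two long exact sequences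
`⋯ → A^i →(×f) A^i →(a i) V^(i+1) →(d (i+1)) A^(i+1) → ⋯` and
`⋯ → B^i →(×f) B^i →(b i) W^(i+1) →(e (i+1)) B^(i+1) → ⋯`
with vertical maps `Φ^i : B^i → A^i` injective and `γ^i : W^i → V^i` surjective:
every `z ∈ A^i` differs from an element of the image of `Φ^i` by an element of
`f·A^i`. -/
theorem ladder_diagram_chase {R : Type*} [CommRing R] (f : R)
    (A B V W : ℤ → Type*)
    [∀ i, AddCommGroup (A i)] [∀ i, Module R (A i)]
    [∀ i, AddCommGroup (B i)] [∀ i, Module R (B i)]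
    [∀ i, AddCommGroup (V i)] [∀ i, Module R (V i)]
    [∀ i, AddCommGroup (W i)] [∀ i, Module R (W i)]
    (a : ∀ i, A i →ₗ[R] V (i + 1)) (d : ∀ i, V i →ₗ[R] A i)
    (b : ∀ i, B i →ₗ[R] W (i + 1)) (e : ∀ i, W i →ₗ[R] B i)
    (Φ : ∀ i, B i →ₗ[R] A i) (γ : ∀ i, W i →ₗ[R] V i)
    -- exactness of the top row
    (hA1 : ∀ i, Function.Exact (fun x : A i => f • x) (a i))
    (hA2 : ∀ i, Function.Exact (a i) (d (i + 1)))
    (hA3 : ∀ i, Function.Exact (d i) (fun x : A i => f • x))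
    -- exactness of the bottom row
    (hB1 : ∀ i, Function.Exact (fun x : B i => f • x) (b i))
    (hB2 : ∀ i, Function.Exact (b i) (e (i + 1)))
    (hB3 : ∀ i, Function.Exact (e i) (fun x : B i => f • x))
    -- commutativity of the squares
    (hsq1 : ∀ i, (a i).comp (Φ i) = (γ (i + 1)).comp (b i))
    (hsq2 : ∀ i, (Φ i).comp (e i) = (d i).comp (γ i))
    -- vertical maps injective / surjective
    (hΦ : ∀ i, Function.Injective (Φ i))
    (hγ : ∀ i, Function.Surjective (γ i)) :
    ∀ i, ∀ z : A i, ∃ u : B i, ∃ w : A i, z - Φ i u = f • w :=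
  ladder_diagram_chase_general f A B V W a d b e Φ γ hA1 hA2 hB2 hsq1 hsq2 hΦ hγ
end
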